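/- arXiv:0912.0051 — 2 statements merged into one kernel-verified Lean document; each statement's English description precedes it below -/
import Mathlib

section
/- Let X be an infinite type and let τ be a topology on the semigroup of matrix units B_λ (λ = |X|) making it a topological semigroup in which the inversion map inv (defined by inv(0) = 0 and inv((a,b)) = (b,a)) is continuous. If (B_λ, τ) is H-closed (for every topological semigroup T and every injective semigroup homomorphism f : B_λ → T that is a topological embedding, the image f(B_λ) is closed in T), then the band E(B_λ) = {(a,a) : a ∈ X} ∪ {0} is a compact subset of (B_λ, τ). -/
open scoped Classical

universe u v

/-- The semigroup of λ×λ-matrix units over the index type `X` (of cardinality λ):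
the set `(X × X) ∪ {0}`, realized as `Option (X × X)` with `none` as the zero. -/
abbrev MatrixUnits (X : Type u) : Type u := Option (X × X)

/-- Multiplication of matrix units: `(a,b)·(c,d) = (a,d)` if `b = c`, and `0` otherwise;
`0` is a two-sided zero. -/
noncomputable def muMul {X : Type u} : MatrixUnits X → MatrixUnits X → MatrixUnits X
  | some (a, b), some (c, d) => if b = c then some (a, d) else none
  | none, _ => none
  | some _, none => none

noncomputable instance {X : Type u} : Semigroup (MatrixUnits X) where
  mul := muMul
  mul_assoc x y z := by
    show muMul (muMul x y) z = muMul x (muMul y z)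
    rcases x with _ | ⟨a, b⟩ <;> rcases y with _ | ⟨c, d⟩ <;> rcases z with _ | ⟨e, f⟩ <;>
      simp only [muMul] <;> split_ifs <;> simp_all [muMul]

/-- The band (set of idempotents) of the semigroup of matrix units:
`{(a,a) : a ∈ X} ∪ {0}`. -/
def MUBand (X : Type u) : Set (MatrixUnits X) :=
  insert none {x : MatrixUnits X | ∃ a : X, x = some (a, a)}

/-- Inversion of matrix units: `(a,b)⁻¹ = (b,a)` and `0⁻¹ = 0`. -/
def muInv {X : Type u} : MatrixUnits X → MatrixUnits X := fun x => x.map Prod.swap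

lemma mu_mul_def {X : Type u} (x y : MatrixUnits X) : x * y = muMul x y := rfl
@[simp] lemma muMul_none_left {X : Type u} (x : MatrixUnits X) : (none : MatrixUnits X) * x = none := rfl
@[simp] lemma muMul_none_right {X : Type u} (x : MatrixUnits X) : x * (none : MatrixUnits X) = none := by
  cases x <;> rfl
@[simp] lemma muMul_some_some {X : Type u} (a b c d : X) :
    (some (a,b) : MatrixUnits X) * some (c,d) = if b = c then some (a,d) else none := rfl
@[simp] lemma muInv_none {X : Type u} : muInv (none : MatrixUnits X) = none := rfl
@[simp] lemma muInv_some {X : Type u} (a b : X) : muInv (some (a,b) : MatrixUnits X) = some (b,a) := rfl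

lemma mu_isolated {X : Type u} [TopologicalSpace (MatrixUnits X)] [T2Space (MatrixUnits X)]
    [ContinuousMul (MatrixUnits X)] (a b : X) :
    IsOpen ({some (a,b)} : Set (MatrixUnits X)) := by
  have hc : Continuous (fun z : MatrixUnits X => some (a,a) * z * some (b,b)) :=
    (continuous_const.mul continuous_id).mul continuous_const
  have hset : ({some (a,b)} : Set (MatrixUnits X))
      = (fun z : MatrixUnits X => some (a,a) * z * some (b,b)) ⁻¹' ({none}ᶜ) := by
    ext z
    rcases z with _ | ⟨c,d⟩
    · simp
    · simp only [Set.mem_singleton_iff, Set.mem_preimage, Set.mem_compl_iff,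
        Set.mem_singleton_iff, muMul_some_some, Option.some.injEq, Prod.mk.injEq]
      split_ifs with h1
      · subst h1
        by_cases h2 : d = b
        · subst h2; simp
        · simp [h2, mu_mul_def, muMul, Ne.symm h2]
      · simp [Ne.symm h1, fun h : c = a ∧ d = b => h1 h.1.symm]
  rw [hset]
  exact (isOpen_compl_singleton).preimage hc

/-- any set of nonzero matrix units is open -/
lemma mu_open_of_none_not_mem {X : Type u} [TopologicalSpace (MatrixUnits X)]
    [T2Space (MatrixUnits X)] [ContinuousMul (MatrixUnits X)]
    (V : Set (MatrixUnits X)) (h : none ∉ V) : IsOpen V := by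
  have : V = ⋃ z ∈ V, {z} := by simp
  rw [this]
  refine isOpen_biUnion fun z hz => ?_
  rcases z with _ | ⟨a,b⟩
  · exact absurd hz h
  · exact mu_isolated a b

noncomputable def TMul {X : Type u} :
    Option (MatrixUnits X) → Option (MatrixUnits X) → Option (MatrixUnits X)
  | some x, some y => some (x * y)
  | none, _ => some none
  | some _, none => some none

@[simp] lemma TMul_none_left {X : Type u} (v : Option (MatrixUnits X)) : TMul none v = some none := by
  cases v <;> rfl
@[simp] lemma TMul_none_right {X : Type u} (v : Option (MatrixUnits X)) : TMul v none = some none := by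
  cases v <;> rfl
@[simp] lemma TMul_some_some {X : Type u} (x y : MatrixUnits X) :
    TMul (some x) (some y) = some (x * y) := rfl

lemma TMul_assoc {X : Type u} (x y z : Option (MatrixUnits X)) :
    TMul (TMul x y) z = TMul x (TMul y z) := by
  rcases x with _ | x <;> rcases y with _ | y <;> rcases z with _ | z <;>
    simp [mul_assoc]


/-- If the infinite topological semigroup of matrix units `B_λ` has
continuous inversion and is `H`-closed, then its band is compact. -/
theorem compact_band_of_hClosed_inverse
    {X : Type u} [Infinite X]
    [TopologicalSpace (MatrixUnits X)] [T2Space (MatrixUnits X)]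
    [ContinuousMul (MatrixUnits X)]
    (hinv : Continuous (muInv (X := X)))
    (hH : ∀ (T : Type u) [Semigroup T] [TopologicalSpace T] [T2Space T] [ContinuousMul T]
      (f : MatrixUnits X → T),
      (∀ a b : MatrixUnits X, f (a * b) = f a * f b) →
      Function.Injective f →
      Topology.IsEmbedding f →
      IsClosed (Set.range f)) :
    IsCompact (MUBand X) := by
  by_contra hc
  -- Step 1: find an open neighbourhood of 0 missing infinitely many idempotents
  have key : ∃ U : Set (MatrixUnits X), IsOpen U ∧ none ∈ U ∧
      Set.Infinite {a : X | some (a,a) ∉ U} := by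
    by_contra hk
    push_neg at hk
    apply hc
    rw [isCompact_iff_finite_subcover]
    intro ι Ucov hUo hcov
    have h0 : (none : MatrixUnits X) ∈ MUBand X := Set.mem_insert _ _
    obtain ⟨i₀, hi₀⟩ := Set.mem_iUnion.1 (hcov h0)
    have hF : Set.Finite {a : X | some (a,a) ∉ Ucov i₀} :=
      hk _ (hUo i₀) hi₀
    have hsel : ∀ a : X, ∃ i, some (a,a) ∈ Ucov i := fun a =>
      Set.mem_iUnion.1 (hcov (Set.mem_insert_iff.2 (Or.inr ⟨a, rfl⟩)))
    choose g hg using hsel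
    refine ⟨insert i₀ (hF.toFinset.image g), ?_⟩
    intro x hx
    rcases Set.mem_insert_iff.1 hx with rfl | ⟨a, rfl⟩
    · exact Set.mem_biUnion (Finset.mem_insert_self _ _) hi₀
    · by_cases hxa : some (a,a) ∈ Ucov i₀
      · exact Set.mem_biUnion (Finset.mem_insert_self _ _) hxa
      · exact Set.mem_biUnion
          (Finset.mem_insert_of_mem (Finset.mem_image.2 ⟨a, hF.mem_toFinset.2 hxa, rfl⟩))
          (hg a)
  obtain ⟨U, hUo, hU0, hAinf⟩ := key
  -- Step 2: sequences
  let e : ℕ ↪ {a : X | some (a,a) ∉ U} := hAinf.natEmbedding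
  let aseq : ℕ → X := fun i => (e (2*i)).1
  let bseq : ℕ → X := fun i => (e (2*i+1)).1
  have haA : ∀ i, some (aseq i, aseq i) ∉ U := fun i => (e (2*i)).2
  have hbA : ∀ i, some (bseq i, bseq i) ∉ U := fun i => (e (2*i+1)).2
  have hab : ∀ i j, bseq i ≠ aseq j := by
    intro i j h
    have := e.injective (Subtype.ext h)
    omega
  have hainj : Function.Injective aseq := by
    intro i j h
    have := e.injective (Subtype.ext h)
    omega
  let s : ℕ → MatrixUnits X := fun i => some (aseq i, bseq i)
  have hs_inj : Function.Injective s := by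
    intro i j h
    simp only [s, Option.some.injEq, Prod.mk.injEq] at h
    exact hainj h.1
  have hss : ∀ i j, s i * s j = none := by
    intro i j
    simp [s, hab i j]
  -- Step 3: the neighbourhoods of 0 given by continuity of inversion
  let V₀ : Set (MatrixUnits X) := (fun z => muInv z * z) ⁻¹' U
  let V₁ : Set (MatrixUnits X) := (fun z => z * muInv z) ⁻¹' U
  have hV₀o : IsOpen V₀ := hUo.preimage (hinv.mul continuous_id)
  have hV₁o : IsOpen V₁ := hUo.preimage (continuous_id.mul hinv)
  have h0V₀ : (none : MatrixUnits X) ∈ V₀ := by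
    show muInv none * none ∈ U
    simpa using hU0
  have h0V₁ : (none : MatrixUnits X) ∈ V₁ := by
    show (none : MatrixUnits X) * muInv none ∈ U
    simpa using hU0
  have hV₀mem : ∀ c d : X, some (c,d) ∈ V₀ → some (d,d) ∈ U := by
    intro c d h
    have : muInv (some (c,d) : MatrixUnits X) * some (c,d) ∈ U := h
    simpa using this
  have hV₁mem : ∀ c d : X, some (c,d) ∈ V₁ → some (c,c) ∈ U := by
    intro c d h
    have : (some (c,d) : MatrixUnits X) * muInv (some (c,d)) ∈ U := h
    simpa using this
  -- mult facts with V₀ / V₁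
  have hsV₁ : ∀ i, ∀ z ∈ V₁, s i * z = none := by
    intro i z hz
    rcases z with _ | ⟨c,d⟩
    · simp
    · have hcU := hV₁mem c d hz
      have : bseq i ≠ c := fun h => (h ▸ hbA i) hcU
      simp [s, this]
  have hV₀s : ∀ i, ∀ z ∈ V₀, z * s i = none := by
    intro i z hz
    rcases z with _ | ⟨c,d⟩
    · simp
    · have hdU := hV₀mem c d hz
      have : d ≠ aseq i := fun h => haA i (h ▸ hdU)
      simp [s, this]
  -- Step 4: the extension semigroup T
  letI semT : Semigroup (Option (MatrixUnits X)) := { mul := TMul, mul_assoc := TMul_assoc }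
  have hmulT : ∀ u v : Option (MatrixUnits X), u * v = TMul u v := fun _ _ => rfl
  letI topT : TopologicalSpace (Option (MatrixUnits X)) :=
    { IsOpen := fun W => IsOpen ((some : MatrixUnits X → Option (MatrixUnits X)) ⁻¹' W) ∧
        ((none : Option (MatrixUnits X)) ∈ W → Set.Finite {i : ℕ | some (s i) ∉ W})
      isOpen_univ := ⟨isOpen_univ, fun _ => by simp⟩
      isOpen_inter := by
        intro W₁ W₂ h₁ h₂
        refine ⟨h₁.1.inter h₂.1, fun hn => Set.Finite.subset ((h₁.2 hn.1).union (h₂.2 hn.2)) ?_⟩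
        intro i hi
        simp only [Set.mem_setOf_eq, Set.mem_inter_iff, not_and_or, Set.mem_union] at hi ⊢
        tauto
      isOpen_sUnion := by
        intro 𝒮 h
        constructor
        · rw [Set.preimage_sUnion]
          exact isOpen_biUnion fun W hW => (h W hW).1
        · rintro ⟨W, hW𝒮, hnW⟩
          refine ((h W hW𝒮).2 hnW).subset ?_
          intro i hi
          simp only [Set.mem_setOf_eq] at hi ⊢
          exact fun hW' => hi ⟨W, hW𝒮, hW'⟩ }
  have hOpenT : ∀ W : Set (Option (MatrixUnits X)), IsOpen W ↔
      (IsOpen ((some : MatrixUnits X → Option (MatrixUnits X)) ⁻¹' W) ∧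
        ((none : Option (MatrixUnits X)) ∈ W → Set.Finite {i : ℕ | some (s i) ∉ W})) :=
    fun _ => Iff.rfl
  -- images of opens are open
  have himg : ∀ V : Set (MatrixUnits X), IsOpen V →
      IsOpen ((some : MatrixUnits X → Option (MatrixUnits X)) '' V) := by
    intro V hV
    refine ⟨?_, fun hn => absurd hn (by simp)⟩
    rw [Set.preimage_image_eq V (Option.some_injective _)]
    exact hV
  -- tail neighbourhoods of the extra point
  have htail : ∀ J : Set ℕ, Jᶜ.Finite →
      IsOpen (insert (none : Option (MatrixUnits X)) ((some : MatrixUnits X → Option (MatrixUnits X)) '' (s '' J))) := by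
    intro J hJ
    constructor
    · have hpre : (some : MatrixUnits X → Option (MatrixUnits X)) ⁻¹'
          (insert none (some '' (s '' J))) = s '' J := by
        ext z
        simp
      rw [hpre]
      refine mu_open_of_none_not_mem _ ?_
      rintro ⟨i, _, hi⟩
      exact Option.some_ne_none _ hi
    · intro _
      refine hJ.subset ?_
      intro i hi
      simp only [Set.mem_setOf_eq] at hi
      exact fun hiJ => hi (Set.mem_insert_of_mem _ ⟨s i, ⟨i, hiJ, rfl⟩, rfl⟩)
  -- Step 5: T is Hausdorff
  have hsep : ∀ z : MatrixUnits X, ∃ P Q : Set (Option (MatrixUnits X)),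
      IsOpen P ∧ IsOpen Q ∧ none ∈ P ∧ some z ∈ Q ∧ Disjoint P Q := by
    intro z
    rcases z with _ | ⟨c,d⟩
    · refine ⟨insert none (some '' (s '' Set.univ)), some '' V₀,
        htail _ (by simp), himg _ hV₀o, Set.mem_insert _ _, ⟨none, h0V₀, rfl⟩, ?_⟩
      rw [Set.disjoint_left]
      rintro t (rfl | ⟨z', ⟨i, -, rfl⟩, rfl⟩) ⟨w, hw, hwt⟩
      · exact Option.some_ne_none _ hwt
      · have : w = s i := Option.some_injective _ hwt
        subst this
        exact hbA i (hV₀mem _ _ hw)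
    · refine ⟨insert none (some '' (s '' {i | s i ≠ some (c,d)})),
        some '' {some (c,d)}, htail _ ?_, himg _ (mu_isolated c d),
        Set.mem_insert _ _, ⟨some (c,d), rfl, rfl⟩, ?_⟩
      · have hsub : {i : ℕ | s i ≠ some (c,d)}ᶜ.Subsingleton := by
          intro i hi j hj
          simp only [Set.mem_compl_iff, Set.mem_setOf_eq, not_not] at hi hj
          exact hs_inj (hi.trans hj.symm)
        exact hsub.finite
      · rw [Set.disjoint_left]
        rintro t (rfl | ⟨z', ⟨i, hi, rfl⟩, rfl⟩) ⟨w, hw, hwt⟩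
        · exact Option.some_ne_none _ hwt
        · have hw' : w = some (c,d) := hw
          have : w = s i := Option.some_injective _ hwt
          exact hi (this ▸ hw')
  letI t2T : T2Space (Option (MatrixUnits X)) := by
    refine ⟨?_⟩
    intro u v huv
    rcases u with _ | x
    · rcases v with _ | y
      · exact absurd rfl huv
      · obtain ⟨P, Q, hP, hQ, h1, h2, hd⟩ := hsep y
        exact ⟨P, Q, hP, hQ, h1, h2, hd⟩
    · rcases v with _ | y
      · obtain ⟨P, Q, hP, hQ, h1, h2, hd⟩ := hsep x
        exact ⟨Q, P, hQ, hP, h2, h1, hd.symm⟩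
      · have hxy : x ≠ y := fun h => huv (by rw [h])
        obtain ⟨W₁, W₂, hW₁, hW₂, hx, hy, hdis⟩ := t2_separation hxy
        refine ⟨some '' W₁, some '' W₂, himg _ hW₁, himg _ hW₂,
          ⟨x, hx, rfl⟩, ⟨y, hy, rfl⟩, ?_⟩
        rw [Set.disjoint_left]
        rintro t ⟨w₁, hw₁, rfl⟩ ⟨w₂, hw₂, hwt⟩
        have : w₂ = w₁ := Option.some_injective _ hwt
        subst this
        exact Set.disjoint_left.1 hdis hw₁ hw₂
  -- Step 6: multiplication on T is continuous
  letI cmT : ContinuousMul (Option (MatrixUnits X)) := by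
    refine ⟨?_⟩
    rw [continuous_def]
    intro W hW
    rw [isOpen_prod_iff]
    intro u v huv
    have huv' : u * v ∈ W := huv
    rcases u with _ | x
    · -- u is the extra point p ; p * v = some none
      have h0W : (some none : Option (MatrixUnits X)) ∈ W := by
        rw [hmulT, TMul_none_left] at huv'
        exact huv'
      rcases v with _ | y
      · -- (p, p)
        refine ⟨insert none (some '' (s '' Set.univ)), insert none (some '' (s '' Set.univ)),
          htail _ (by simp), htail _ (by simp), Set.mem_insert _ _, Set.mem_insert _ _, ?_⟩
        rintro ⟨u', v'⟩ ⟨hu', hv'⟩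
        show u' * v' ∈ W
        rcases hu' with rfl | ⟨z₁, ⟨i, -, rfl⟩, rfl⟩ <;>
          rcases hv' with rfl | ⟨z₂, ⟨j, -, rfl⟩, rfl⟩ <;>
            simp only [hmulT, TMul_none_left, TMul_none_right, TMul_some_some, hss]
        all_goals exact h0W
      · rcases y with _ | ⟨c,d⟩
        · -- (p, 0)
          refine ⟨insert none (some '' (s '' Set.univ)), some '' V₁,
            htail _ (by simp), himg _ hV₁o, Set.mem_insert _ _, ⟨none, h0V₁, rfl⟩, ?_⟩
          rintro ⟨u', v'⟩ ⟨hu', ⟨z₂, hz₂, rfl⟩⟩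
          show u' * some z₂ ∈ W
          rcases hu' with rfl | ⟨z₁, ⟨i, -, rfl⟩, rfl⟩
          · simpa only [hmulT, TMul_none_left] using h0W
          · rw [hmulT, TMul_some_some, hsV₁ i z₂ hz₂]
            exact h0W
        · -- (p, some (c,d))
          refine ⟨insert none (some '' (s '' {i | bseq i ≠ c})), some '' {some (c,d)},
            htail _ ?_, himg _ (mu_isolated c d), Set.mem_insert _ _,
            ⟨some (c,d), rfl, rfl⟩, ?_⟩
          · have hsub : {i : ℕ | bseq i ≠ c}ᶜ.Subsingleton := by
              intro i hi j hj
              simp only [Set.mem_compl_iff, Set.mem_setOf_eq, not_not] at hi hj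
              have h1 := e.injective (Subtype.ext (hi.trans hj.symm) :
                e (2*i+1) = e (2*j+1))
              omega
            exact hsub.finite
          · rintro ⟨u', v'⟩ ⟨hu', ⟨w, hw, rfl⟩⟩
            have hw' : w = some (c,d) := hw
            subst hw'
            show u' * some (some (c,d)) ∈ W
            rcases hu' with rfl | ⟨z₁, ⟨i, hi, rfl⟩, rfl⟩
            · simpa only [hmulT, TMul_none_left] using h0W
            · have hz : s i * some (c,d) = none := by
                simp only [Set.mem_setOf_eq] at hi
                simp [s, hi]
              rw [hmulT, TMul_some_some, hz]
              exact h0W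
    · rcases v with _ | y
      · -- (some x, p)
        have h0W : (some none : Option (MatrixUnits X)) ∈ W := by
          rw [hmulT, TMul_none_right] at huv'
          exact huv'
        rcases x with _ | ⟨c,d⟩
        · -- (0, p)
          refine ⟨some '' V₀, insert none (some '' (s '' Set.univ)),
            himg _ hV₀o, htail _ (by simp), ⟨none, h0V₀, rfl⟩, Set.mem_insert _ _, ?_⟩
          rintro ⟨u', v'⟩ ⟨⟨z₁, hz₁, rfl⟩, hv'⟩
          show some z₁ * v' ∈ W
          rcases hv' with rfl | ⟨z₂, ⟨i, -, rfl⟩, rfl⟩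
          · simpa only [hmulT, TMul_none_right] using h0W
          · rw [hmulT, TMul_some_some, hV₀s i z₁ hz₁]
            exact h0W
        · -- (some (c,d), p)
          refine ⟨some '' {some (c,d)}, insert none (some '' (s '' {i | aseq i ≠ d})),
            himg _ (mu_isolated c d), htail _ ?_, ⟨some (c,d), rfl, rfl⟩,
            Set.mem_insert _ _, ?_⟩
          · have hsub : {i : ℕ | aseq i ≠ d}ᶜ.Subsingleton := by
              intro i hi j hj
              simp only [Set.mem_compl_iff, Set.mem_setOf_eq, not_not] at hi hj
              exact hainj (hi.trans hj.symm)
            exact hsub.finite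
          · rintro ⟨u', v'⟩ ⟨⟨w, hw, rfl⟩, hv'⟩
            have hw' : w = some (c,d) := hw
            subst hw'
            show some (some (c,d)) * v' ∈ W
            rcases hv' with rfl | ⟨z₂, ⟨i, hi, rfl⟩, rfl⟩
            · simpa only [hmulT, TMul_none_right] using h0W
            · have hz : some (c,d) * s i = none := by
                simp only [Set.mem_setOf_eq] at hi
                simp [s, Ne.symm hi]
              rw [hmulT, TMul_some_some, hz]
              exact h0W
      · -- both in B
        have hxyW : x * y ∈ (some : MatrixUnits X → Option (MatrixUnits X)) ⁻¹' W := huv'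
        have hBopen : IsOpen {p : MatrixUnits X × MatrixUnits X |
            p.1 * p.2 ∈ (some : MatrixUnits X → Option (MatrixUnits X)) ⁻¹' W} :=
          IsOpen.preimage continuous_mul hW.1
        obtain ⟨W₁, W₂, hW₁, hW₂, hx1, hy2, hsub⟩ := isOpen_prod_iff.1 hBopen x y hxyW
        refine ⟨some '' W₁, some '' W₂, himg _ hW₁, himg _ hW₂,
          ⟨x, hx1, rfl⟩, ⟨y, hy2, rfl⟩, ?_⟩
        rintro ⟨u', v'⟩ ⟨⟨x', hx', rfl⟩, ⟨y', hy', rfl⟩⟩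
        show some x' * some y' ∈ W
        rw [hmulT, TMul_some_some]
        exact hsub (Set.mk_mem_prod hx' hy')
  -- Step 7: some : B → T is an embedding
  have hemb : Topology.IsEmbedding (some : MatrixUnits X → Option (MatrixUnits X)) := by
    refine ⟨⟨?_⟩, Option.some_injective _⟩
    refine TopologicalSpace.ext_iff.2 fun V => ?_
    rw [isOpen_induced_iff]
    constructor
    · intro hV
      exact ⟨some '' V, himg _ hV, Set.preimage_image_eq V (Option.some_injective _)⟩
    · rintro ⟨W, hW, rfl⟩
      exact hW.1
  -- Step 8: conclude
  have hclosed := hH (Option (MatrixUnits X)) (some : MatrixUnits X → Option (MatrixUnits X))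
    (fun a b => rfl) (Option.some_injective _) hemb
  have hmem : (none : Option (MatrixUnits X)) ∈ closure (Set.range
      (some : MatrixUnits X → Option (MatrixUnits X))) := by
    rw [mem_closure_iff]
    intro W hWo hnW
    have hfin := hWo.2 hnW
    have hne : {i : ℕ | some (s i) ∉ W}ᶜ.Nonempty := by
      rcases Set.eq_empty_or_nonempty ({i : ℕ | some (s i) ∉ W}ᶜ) with h | h
      · exfalso
        have huniv : {i : ℕ | some (s i) ∉ W} = Set.univ := by
          rw [← Set.compl_empty, ← h, compl_compl]
        exact Set.infinite_univ (huniv ▸ hfin)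
      · exact h
    obtain ⟨i, hi⟩ := hne
    simp only [Set.mem_compl_iff, Set.mem_setOf_eq, not_not] at hi
    exact ⟨some (s i), hi, Set.mem_range_self _⟩
  rw [hclosed.closure_eq] at hmem
  obtain ⟨z, hz⟩ := hmem
  exact Option.some_ne_none z hz
end

section
/- Let X be an infinite type and let T be a countably compact topological semigroup. Then every semigroup homomorphism h from the semigroup of matrix units B_λ (λ = |X|) into T is annihilating, i.e., h is a constant map. -/
open scoped Classical

universe u v

section AuxMU

variable {X : Type u}

lemma mu_some_some (p q r s : X) :
    (some (p, q) : MatrixUnits X) * some (r, s) = if q = r then some (p, s) else none := rfl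

lemma mu_none_mul (t : MatrixUnits X) : (none : MatrixUnits X) * t = none := rfl

lemma mu_mul_none (p q : X) : (some (p, q) : MatrixUnits X) * none = none := rfl

end AuxMU

/-- In a countably compact space, every sequence has a cluster point, in the strong
sense that some point lies in the closure of every tail of the sequence. -/
lemma exists_cluster_of_seq {T : Type v} [TopologicalSpace T]
    (hcc : ∀ U : ℕ → Set T, (∀ i, IsOpen (U i)) → (⋃ i, U i) = Set.univ →
      ∃ t : Finset ℕ, (⋃ i ∈ t, U i) = Set.univ)
    (s : ℕ → T) :
    ∃ q : T, ∀ N : ℕ, q ∈ closure (s '' {n | N ≤ n}) := by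
  by_contra hq
  push_neg at hq
  have hcov : (⋃ N : ℕ, (closure (s '' {n | N ≤ n}))ᶜ) = Set.univ := by
    ext r
    simp only [Set.mem_iUnion, Set.mem_compl_iff, Set.mem_univ, iff_true]
    exact hq r
  obtain ⟨t, ht⟩ := hcc _ (fun N => isClosed_closure.isOpen_compl) hcov
  have hmem : s (t.sup id) ∈ ⋃ i ∈ t, (closure (s '' {n | i ≤ n}))ᶜ := by
    rw [ht]; exact Set.mem_univ _
  rw [Set.mem_iUnion₂] at hmem
  obtain ⟨i, hit, hi⟩ := hmem
  exact hi (subset_closure ⟨t.sup id, Finset.le_sup (f := id) hit, rfl⟩)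

/-- Every semigroup homomorphism from an infinite semigroup of matrix units
into a countably compact topological semigroup is annihilating (constant). -/
theorem hom_matrixUnits_into_countablyCompact_annihilating
    {X : Type u} [Infinite X]
    {T : Type v} [Semigroup T] [TopologicalSpace T] [T2Space T] [ContinuousMul T]
    (hcc : ∀ U : ℕ → Set T, (∀ i, IsOpen (U i)) → (⋃ i, U i) = Set.univ →
      ∃ t : Finset ℕ, (⋃ i ∈ t, U i) = Set.univ) :
    ∀ h : MatrixUnits X → T,
      (∀ a b : MatrixUnits X, h (a * b) = h a * h b) →
      ∃ c : T, ∀ x : MatrixUnits X, h x = c := by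
  intro h hmul
  have hrev : ∀ s t : MatrixUnits X, h s * h t = h (s * t) := fun s t => (hmul s t).symm
  obtain ⟨a, hainj⟩ : ∃ a : ℕ → X, Function.Injective a :=
    ⟨Infinite.natEmbedding X, (Infinite.natEmbedding X).injective⟩
  by_cases he : h (some (a 0, a 0)) = h none
  · -- the homomorphism is constantly `h none`
    refine ⟨h none, ?_⟩
    have hA : ∀ v : X, h (some (a 0, v)) = h none := by
      intro v
      calc h (some (a 0, v))
          = h (some (a 0, a 0) * some (a 0, v)) := by rw [mu_some_some, if_pos rfl]
        _ = h (some (a 0, a 0)) * h (some (a 0, v)) := hmul _ _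
        _ = h none * h (some (a 0, v)) := by rw [he]
        _ = h (none * some (a 0, v)) := hrev _ _
        _ = h none := by rw [mu_none_mul]
    intro s
    rcases s with _ | ⟨u, v⟩
    · rfl
    · calc h (some (u, v))
          = h (some (u, a 0) * some (a 0, v)) := by rw [mu_some_some, if_pos rfl]
        _ = h (some (u, a 0)) * h (some (a 0, v)) := hmul _ _
        _ = h (some (u, a 0)) * h none := by rw [hA v]
        _ = h (some (u, a 0) * none) := hrev _ _
        _ = h none := by rw [mu_mul_none]
  · -- derive a contradiction with countable compactness
    exfalso
    set z : T := h none with hzdef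
    set ws : ℕ → T := fun n => h (some (a (n + 1), a (n + 1))) with hwdef
    set xs : ℕ → T := fun n => h (some (a 0, a (n + 1))) with hxdef
    set ys : ℕ → T := fun n => h (some (a (n + 1), a 0)) with hydef
    have hane : ∀ {n m : ℕ}, n ≠ m → a n ≠ a m := fun hnm hc => hnm (hainj hc)
    -- algebraic relations
    have hww : ∀ n m : ℕ, n ≠ m → ws n * ws m = z := by
      intro n m hnm
      simp only [hwdef, hzdef]
      rw [hrev, mu_some_some, if_neg (hane (by omega))]
    have hwidem : ∀ n : ℕ, ws n * ws n = ws n := by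
      intro n
      simp only [hwdef]
      rw [hrev, mu_some_some, if_pos rfl]
    have hxw : ∀ n : ℕ, xs n * ws n = xs n := by
      intro n
      simp only [hxdef, hwdef]
      rw [hrev, mu_some_some, if_pos rfl]
    have hwy : ∀ n : ℕ, ws n * ys n = ys n := by
      intro n
      simp only [hwdef, hydef]
      rw [hrev, mu_some_some, if_pos rfl]
    have hxz : ∀ n : ℕ, xs n * z = z := by
      intro n
      simp only [hxdef, hzdef]
      rw [hrev, mu_mul_none]
    have hzy : ∀ n : ℕ, z * ys n = z := by
      intro n
      simp only [hydef, hzdef]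
      rw [hrev, mu_none_mul]
    have hxy : ∀ n : ℕ, xs n * ys n = h (some (a 0, a 0)) := by
      intro n
      simp only [hxdef, hydef]
      rw [hrev, mu_some_some, if_pos rfl]
    have hzz : z * z = z := by
      rw [hzdef, hrev, mu_none_mul]
    -- Step 1: the idempotents `ws n` converge to `z`
    have hwconv : ∀ V : Set T, IsOpen V → z ∈ V → {n : ℕ | ws n ∉ V}.Finite := by
      intro V hVo hzV
      by_contra hfin
      have hinf : {n : ℕ | ws n ∉ V}.Infinite := hfin
      obtain ⟨q, hqcl⟩ :=
        exists_cluster_of_seq hcc (fun k => ws (Nat.nth (fun n => ws n ∉ V) k))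
      have hge : ∀ k : ℕ, k ≤ Nat.nth (fun n => ws n ∉ V) k := fun k =>
        (Nat.nth_strictMono hinf).le_apply
      have hqw : ∀ j : ℕ, q * ws j = z := by
        intro j
        have hmem : q * ws j ∈ closure ({z} : Set T) := by
          refine map_mem_closure (f := fun u => u * ws j) (continuous_mul_right (ws j)) (hqcl (j + 1)) ?_
          rintro t ⟨k, hk, rfl⟩
          have h1 := hge k
          have h2 : j + 1 ≤ k := hk
          have hne : Nat.nth (fun n => ws n ∉ V) k ≠ j := by omega
          show ws (Nat.nth (fun n => ws n ∉ V) k) * ws j ∈ ({z} : Set T)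
          rw [Set.mem_singleton_iff]
          exact hww _ _ hne
        rwa [closure_singleton, Set.mem_singleton_iff] at hmem
      have hqq : q * q = z := by
        have hmem : q * q ∈ closure ({z} : Set T) := by
          refine map_mem_closure (f := fun u => q * u) (continuous_mul_left q) (hqcl 0) ?_
          rintro t ⟨k, _, rfl⟩
          show q * ws (Nat.nth (fun n => ws n ∉ V) k) ∈ ({z} : Set T)
          rw [Set.mem_singleton_iff]
          exact hqw _
        rwa [closure_singleton, Set.mem_singleton_iff] at hmem
      have hpre : ((q, q) : T × T) ∈ (fun p : T × T => p.1 * p.2) ⁻¹' V := by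
        simp only [Set.mem_preimage]
        rw [hqq]; exact hzV
      obtain ⟨U₁, U₂, hU₁, hU₂, hq₁, hq₂, hsub⟩ :=
        isOpen_prod_iff.mp (hVo.preimage continuous_mul) q q hpre
      obtain ⟨t, htU, htimg⟩ :=
        mem_closure_iff.mp (hqcl 0) (U₁ ∩ U₂) (hU₁.inter hU₂) ⟨hq₁, hq₂⟩
      obtain ⟨k, -, hteq⟩ := htimg
      have hteq' : ws (Nat.nth (fun n => ws n ∉ V) k) = t := hteq
      subst hteq'
      have hmemV := hsub (Set.mk_mem_prod htU.1 htU.2)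
      simp only [Set.mem_preimage] at hmemV
      rw [hwidem] at hmemV
      exact (Nat.nth_mem_of_infinite hinf k) hmemV
    -- Step 2: the sequence `xs` converges to `z`
    have hxconv : ∀ V : Set T, IsOpen V → z ∈ V → {n : ℕ | xs n ∉ V}.Finite := by
      intro V hVo hzV
      by_contra hfin
      have hinf : {n : ℕ | xs n ∉ V}.Infinite := hfin
      obtain ⟨q, hqcl⟩ :=
        exists_cluster_of_seq hcc (fun k => xs (Nat.nth (fun n => xs n ∉ V) k))
      have hqz : q * z = z := by
        have hmem : q * z ∈ closure ({z} : Set T) := by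
          refine map_mem_closure (f := fun u => u * z) (continuous_mul_right z) (hqcl 0) ?_
          rintro t ⟨k, _, rfl⟩
          show xs (Nat.nth (fun n => xs n ∉ V) k) * z ∈ ({z} : Set T)
          rw [Set.mem_singleton_iff]
          exact hxz _
        rwa [closure_singleton, Set.mem_singleton_iff] at hmem
      have hpre : ((q, z) : T × T) ∈ (fun p : T × T => p.1 * p.2) ⁻¹' V := by
        simp only [Set.mem_preimage]
        rw [hqz]; exact hzV
      obtain ⟨U₁, U₂, hU₁, hU₂, hq₁, hz₂, hsub⟩ :=
        isOpen_prod_iff.mp (hVo.preimage continuous_mul) q z hpre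
      obtain ⟨b, hb⟩ := (hwconv U₂ hU₂ hz₂).bddAbove
      obtain ⟨t, htU, htimg⟩ :=
        mem_closure_iff.mp (hqcl (b + 1)) U₁ hU₁ hq₁
      obtain ⟨k, hk, hteq⟩ := htimg
      have hteq' : xs (Nat.nth (fun n => xs n ∉ V) k) = t := hteq
      subst hteq'
      have hkge : b + 1 ≤ k := hk
      have hmge : b + 1 ≤ Nat.nth (fun n => xs n ∉ V) k :=
        le_trans hkge (Nat.nth_strictMono hinf).le_apply
      have hwm : ws (Nat.nth (fun n => xs n ∉ V) k) ∈ U₂ := by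
        by_contra hwn
        have : Nat.nth (fun n => xs n ∉ V) k ≤ b := hb hwn
        omega
      have hmemV := hsub (Set.mk_mem_prod htU hwm)
      simp only [Set.mem_preimage] at hmemV
      rw [hxw] at hmemV
      exact (Nat.nth_mem_of_infinite hinf k) hmemV
    -- Step 3: the sequence `ys` converges to `z`
    have hyconv : ∀ V : Set T, IsOpen V → z ∈ V → {n : ℕ | ys n ∉ V}.Finite := by
      intro V hVo hzV
      by_contra hfin
      have hinf : {n : ℕ | ys n ∉ V}.Infinite := hfin
      obtain ⟨q, hqcl⟩ :=
        exists_cluster_of_seq hcc (fun k => ys (Nat.nth (fun n => ys n ∉ V) k))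
      have hzq : z * q = z := by
        have hmem : z * q ∈ closure ({z} : Set T) := by
          refine map_mem_closure (f := fun u => z * u) (continuous_mul_left z) (hqcl 0) ?_
          rintro t ⟨k, _, rfl⟩
          show z * ys (Nat.nth (fun n => ys n ∉ V) k) ∈ ({z} : Set T)
          rw [Set.mem_singleton_iff]
          exact hzy _
        rwa [closure_singleton, Set.mem_singleton_iff] at hmem
      have hpre : ((z, q) : T × T) ∈ (fun p : T × T => p.1 * p.2) ⁻¹' V := by
        simp only [Set.mem_preimage]
        rw [hzq]; exact hzV
      obtain ⟨U₁, U₂, hU₁, hU₂, hz₁, hq₂, hsub⟩ :=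
        isOpen_prod_iff.mp (hVo.preimage continuous_mul) z q hpre
      obtain ⟨b, hb⟩ := (hwconv U₁ hU₁ hz₁).bddAbove
      obtain ⟨t, htU, htimg⟩ :=
        mem_closure_iff.mp (hqcl (b + 1)) U₂ hU₂ hq₂
      obtain ⟨k, hk, hteq⟩ := htimg
      have hteq' : ys (Nat.nth (fun n => ys n ∉ V) k) = t := hteq
      subst hteq'
      have hkge : b + 1 ≤ k := hk
      have hmge : b + 1 ≤ Nat.nth (fun n => ys n ∉ V) k :=
        le_trans hkge (Nat.nth_strictMono hinf).le_apply
      have hwm : ws (Nat.nth (fun n => ys n ∉ V) k) ∈ U₁ := by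
        by_contra hwn
        have : Nat.nth (fun n => ys n ∉ V) k ≤ b := hb hwn
        omega
      have hmemV := hsub (Set.mk_mem_prod hwm htU)
      simp only [Set.mem_preimage] at hmemV
      rw [hwy] at hmemV
      exact (Nat.nth_mem_of_infinite hinf k) hmemV
    -- Step 4: contradiction with `e ≠ z`
    have hWo : IsOpen ({h (some (a 0, a 0))}ᶜ : Set T) := isOpen_compl_singleton
    have hzW : z ∈ ({h (some (a 0, a 0))}ᶜ : Set T) := by
      rw [Set.mem_compl_iff, Set.mem_singleton_iff]
      exact fun hc => he hc.symm
    have hpre : ((z, z) : T × T) ∈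
        (fun p : T × T => p.1 * p.2) ⁻¹' ({h (some (a 0, a 0))}ᶜ : Set T) := by
      simp only [Set.mem_preimage]
      rw [hzz]; exact hzW
    obtain ⟨V₁, V₂, hV₁, hV₂, hz₁, hz₂, hsub⟩ :=
      isOpen_prod_iff.mp (hWo.preimage continuous_mul) z z hpre
    obtain ⟨n, hn⟩ :=
      (((hxconv V₁ hV₁ hz₁).union (hyconv V₂ hV₂ hz₂)).infinite_compl).nonempty
    have hx : xs n ∈ V₁ := by
      by_contra hc
      exact hn (Set.mem_union_left _ hc)
    have hy : ys n ∈ V₂ := by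
      by_contra hc
      exact hn (Set.mem_union_right _ hc)
    have hmemW := hsub (Set.mk_mem_prod hx hy)
    simp only [Set.mem_preimage] at hmemW
    rw [hxy] at hmemW
    exact hmemW rfl
end
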